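/- arXiv:1309.3304 — 2 statements merged into one kernel-verified Lean document; each statement's English description precedes it below -/
import Mathlib

section
/- In a strong parapolar space of diameter 2, let L1, L2, L3, L4 be four (not necessarily pairwise distinct) singular lines such that L_i and L_{i+1} (indices mod 4) share a point p_i for i = 1,2,3,4, and suppose p_1 and p_3 are not collinear. Then L1, L2, L3, L4 are contained in a unique common symplecton. -/
namespace ImbrexGeom

variable {P : Type*}

/-- Two points are collinear: equal or on a common line. -/
def Col (Ls : Set (Set P)) (x y : P) : Prop :=
  x = y ∨ ∃ L ∈ Ls, x ∈ L ∧ y ∈ L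

/-- A line of the geometry induced on a subset `S`. -/
def LineIn (Ls : Set (Set P)) (S : Set P) (L : Set P) : Prop :=
  L ∈ Ls ∧ L ⊆ S

/-- Collinearity inside the geometry induced on `S`. -/
def ColIn (Ls : Set (Set P)) (S : Set P) (x y : P) : Prop :=
  x = y ∨ ∃ L, LineIn Ls S L ∧ x ∈ L ∧ y ∈ L

/-- A subspace of the geometry induced on `S`. -/
def IsSubspaceIn (Ls : Set (Set P)) (S T : Set P) : Prop :=
  T ⊆ S ∧ ∀ L, LineIn Ls S L → ∀ x ∈ L, ∀ y ∈ L, x ≠ y → x ∈ T → y ∈ T → L ⊆ T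

def IsSubspace (Ls : Set (Set P)) (T : Set P) : Prop :=
  IsSubspaceIn Ls Set.univ T

/-- A convex subspace (adapted to diameter 2): closed under taking common
neighbours of non-collinear pairs, i.e. all points on shortest paths. -/
def IsConvex (Ls : Set (Set P)) (S : Set P) : Prop :=
  IsSubspace Ls S ∧ ∀ x ∈ S, ∀ y ∈ S, ¬ Col Ls x y →
    ∀ z, Col Ls x z → Col Ls z y → z ∈ S

/-- `S` is the smallest convex subspace containing `x` and `y`. -/
def SmallestConvex (Ls : Set (Set P)) (x y : P) (S : Set P) : Prop :=
  IsConvex Ls S ∧ x ∈ S ∧ y ∈ S ∧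
    ∀ S', IsConvex Ls S' → x ∈ S' → y ∈ S' → S ⊆ S'

/-- A singular subspace of the geometry induced on `S`. -/
def IsSingularIn (Ls : Set (Set P)) (S T : Set P) : Prop :=
  IsSubspaceIn Ls S T ∧ ∀ x ∈ T, ∀ y ∈ T, ColIn Ls S x y

def IsSingular (Ls : Set (Set P)) (T : Set P) : Prop :=
  IsSingularIn Ls Set.univ T

/-- A maximal singular subspace of the geometry induced on `S`. -/
def MaxSingularIn (Ls : Set (Set P)) (S T : Set P) : Prop :=
  IsSingularIn Ls S T ∧ ∀ T', IsSingularIn Ls S T' → T ⊆ T' → T' = T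

/-- A block: a maximal singular subspace of the whole geometry. -/
def IsBlock (Ls : Set (Set P)) (B : Set P) : Prop :=
  MaxSingularIn Ls Set.univ B

/-- The geometry induced on `S` has polar rank `r`: every nested (strictly
increasing) sequence of singular subspaces has length at most `r + 1`, and
one of length `r + 1` exists. -/
def HasPolarRank (Ls : Set (Set P)) (S : Set P) (r : ℕ) : Prop :=
  (∀ n : ℕ, ∀ f : Fin n → Set P, (∀ i, IsSingularIn Ls S (f i)) →
      (∀ i j, i < j → f i ⊂ f j) → n ≤ r + 1) ∧
  ∃ f : Fin (r + 1) → Set P, (∀ i, IsSingularIn Ls S (f i)) ∧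
      ∀ i j : Fin (r + 1), i < j → f i ⊂ f j

/-- The geometry induced on `S` is a polar space of rank `r`
(Buekenhout–Shult axioms). -/
def IsPolarSpace (Ls : Set (Set P)) (S : Set P) (r : ℕ) : Prop :=
  (∀ L, LineIn Ls S L → ∃ x ∈ L, ∃ y ∈ L, ∃ z ∈ L, x ≠ y ∧ x ≠ z ∧ y ≠ z) ∧
  (∀ x ∈ S, ∃ y ∈ S, ¬ ColIn Ls S x y) ∧
  HasPolarRank Ls S r ∧
  (∀ x ∈ S, ∀ L, LineIn Ls S L → x ∉ L →
      (∃! y, y ∈ L ∧ ColIn Ls S x y) ∨ ∀ y ∈ L, ColIn Ls S x y)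

/-- A strong parapolar space of diameter 2. -/
structure StrongParapolar2 (Ls : Set (Set P)) : Prop where
  connected : ∀ x y : P, Relation.ReflTransGen (Col Ls) x y
  pps1 : ∀ x : P, ∀ L ∈ Ls, x ∉ L →
      (∀ y ∈ L, ¬ Col Ls x y) ∨ (∃! y, y ∈ L ∧ Col Ls x y) ∨ ∀ y ∈ L, Col Ls x y
  pps1_none : ∃ x : P, ∃ L ∈ Ls, ∀ y ∈ L, ¬ Col Ls x y
  pps1_one : ∃ x : P, ∃ L ∈ Ls, x ∉ L ∧ ∃! y, y ∈ L ∧ Col Ls x y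
  pps1_all : ∃ x : P, ∃ L ∈ Ls, x ∉ L ∧ ∀ y ∈ L, Col Ls x y
  pps2 : ∀ x y : P, ¬ Col Ls x y →
      ∃ S, SmallestConvex Ls x y S ∧ ∃ r, 2 ≤ r ∧ IsPolarSpace Ls S r

/-- A symplecton: the smallest convex subspace of a non-collinear pair. -/
def IsSymp (Ls : Set (Set P)) (S : Set P) : Prop :=
  ∃ x y, ¬ Col Ls x y ∧ SmallestConvex Ls x y S

/-- (PPS4): every nested sequence of singular subspaces has finite length. -/
def PPS4 (Ls : Set (Set P)) : Prop :=
  ∀ f : ℕ → Set P, (∀ n, IsSingular Ls (f n)) → ¬ ∀ n, f n ⊂ f (n + 1)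

/-- The imbrex axiom (Imb). -/
def Imb (Ls : Set (Set P)) : Prop :=
  ∀ x : P, ∀ L ∈ Ls, (∀ y ∈ L, ¬ Col Ls x y) →
    ∀ y₁ ∈ L, ∀ y₂ ∈ L, y₁ ≠ y₂ →
      ∀ S₁ S₂, SmallestConvex Ls x y₁ S₁ → SmallestConvex Ls x y₂ S₂ →
        MaxSingularIn Ls S₁ (S₁ ∩ S₂) ∧ MaxSingularIn Ls S₂ (S₁ ∩ S₂)

/-- An imbrex geometry. -/
structure ImbrexGeometry (Ls : Set (Set P)) : Prop where
  spp : StrongParapolar2 Ls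
  pps4 : PPS4 Ls
  imb : Imb Ls

/-- The geometry has symplectic rank `r`: all symplecta have polar rank `r`. -/
def SympRank (Ls : Set (Set P)) (r : ℕ) : Prop :=
  ∀ S, IsSymp Ls S → HasPolarRank Ls S r

/-- All symplecta are thick generalized quadrangles: every point of a
symplecton lies on at least three lines of it (lines already have at least
three points by the polar space axioms). -/
def ThickSymps (Ls : Set (Set P)) : Prop :=
  ∀ S, IsSymp Ls S → ∀ x ∈ S, ∃ L₁ L₂ L₃, LineIn Ls S L₁ ∧ LineIn Ls S L₂ ∧
    LineIn Ls S L₃ ∧ L₁ ≠ L₂ ∧ L₁ ≠ L₃ ∧ L₂ ≠ L₃ ∧ x ∈ L₁ ∧ x ∈ L₂ ∧ x ∈ L₃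

/-- The perp of a set of lines in the geometry induced on `S`: all lines of
`S` concurrent with every member of the set. -/
def PerpSet (Ls : Set (Set P)) (S : Set P) (T : Set (Set P)) : Set (Set P) :=
  {N | LineIn Ls S N ∧ ∀ M ∈ T, (N ∩ M).Nonempty}

/-- A pair of lines is regular. -/
def RegularPair (Ls : Set (Set P)) (S : Set P) (L M : Set P) : Prop :=
  ∃ L' M', L' ∈ PerpSet Ls S {L, M} ∧ M' ∈ PerpSet Ls S {L, M} ∧ L' ≠ M' ∧
    PerpSet Ls S (PerpSet Ls S {L, M}) = PerpSet Ls S {L', M'}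

/-- `N` is a member of the spread of the symplecton `H` induced by the
block `B`: `N = B' ∩ H` for some block `B'` meeting `B`. -/
def InSpreadOf (Ls : Set (Set P)) (H B : Set P) (N : Set P) : Prop :=
  ∃ B', IsBlock Ls B' ∧ (B' ∩ B).Nonempty ∧ N = B' ∩ H

/-!
The symplecton `ξ(p₁, p₃)` contains the common neighbours `p₂, p₄` of `p₁` and `p₃`, hence
the four lines. For uniqueness, a symplecton `S'` containing the lines contains `p₁, p₃`, so
`ξ(p₁, p₃) ⊆ S'` by minimality. Conversely every point of the polar space `S'` lies in
`ξ(p₁, p₃)`: convexity absorbs the neighbours in `S'` of any point of `ξ(p₁, p₃) ∩ S'` that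
has a non-neighbour in `ξ(p₁, p₃) ∩ S'`, and the one-or-all axiom of `S'` provides enough such
points, starting from the non-collinear pair `p₁, p₃`.
-/

section Collinearity

variable {Ls : Set (Set P)} {S L : Set P} {x y : P}

theorem Col.symm (h : Col Ls x y) : Col Ls y x := by
  rcases h with rfl | ⟨L, hL, hx, hy⟩
  · exact Or.inl rfl
  · exact Or.inr ⟨L, hL, hy, hx⟩

theorem col_of_mem (hL : L ∈ Ls) (hx : x ∈ L) (hy : y ∈ L) : Col Ls x y :=
  Or.inr ⟨L, hL, hx, hy⟩

theorem Col.exists_line (h : Col Ls x y) (hxy : x ≠ y) : ∃ L ∈ Ls, x ∈ L ∧ y ∈ L :=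
  h.resolve_left hxy

theorem IsSubspace.line_subset (hS : IsSubspace Ls S) (hL : L ∈ Ls) (hx : x ∈ L) (hy : y ∈ L)
    (hxy : x ≠ y) (hxS : x ∈ S) (hyS : y ∈ S) : L ⊆ S :=
  hS.2 L ⟨hL, Set.subset_univ L⟩ x hx y hy hxy hxS hyS

theorem IsSubspace.colIn_iff_col (hS : IsSubspace Ls S) (hx : x ∈ S) (hy : y ∈ S) :
    ColIn Ls S x y ↔ Col Ls x y := by
  constructor
  · rintro (rfl | ⟨L, ⟨hL, -⟩, hxL, hyL⟩)
    exacts [Or.inl rfl, col_of_mem hL hxL hyL]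
  · intro h
    by_cases hxy : x = y
    · exact Or.inl hxy
    obtain ⟨L, hL, hxL, hyL⟩ := h.exists_line hxy
    exact Or.inr ⟨L, ⟨hL, hS.line_subset hL hxL hyL hxy hx hy⟩, hxL, hyL⟩

end Collinearity

section PolarSubspace

variable {Ls : Set (Set P)} {S' L : Set P} {r : ℕ} {x a : P}
  (hS' : IsSubspace Ls S') (hpol : IsPolarSpace Ls S' r)
include hS' hpol

theorem IsPolarSpace.exists_col (hx : x ∈ S') (hL : L ∈ Ls) (hLS' : L ⊆ S') (hxL : x ∉ L)
    (ha : a ∈ L) : ∃ u ∈ L, Col Ls x u := by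
  rcases hpol.2.2.2 x hx L ⟨hL, hLS'⟩ hxL with ⟨u, ⟨huL, hxu⟩, -⟩ | hall
  · exact ⟨u, huL, (hS'.colIn_iff_col hx (hLS' huL)).1 hxu⟩
  · exact ⟨a, ha, (hS'.colIn_iff_col hx (hLS' ha)).1 (hall a ha)⟩

theorem IsPolarSpace.eq_of_col (hx : x ∈ S') (hL : L ∈ Ls) (hLS' : L ⊆ S') (ha : a ∈ L)
    (hxa : ¬ Col Ls x a) {u v : P} (hu : u ∈ L) (hv : v ∈ L) (hxu : Col Ls x u)
    (hxv : Col Ls x v) : u = v := by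
  have hxL : x ∉ L := fun h => hxa (col_of_mem hL h ha)
  have col_iff {y} (hy : y ∈ L) := hS'.colIn_iff_col hx (hLS' hy)
  rcases hpol.2.2.2 x hx L ⟨hL, hLS'⟩ hxL with ⟨w, -, huniq⟩ | hall
  · exact (huniq u ⟨hu, (col_iff hu).2 hxu⟩).trans (huniq v ⟨hv, (col_iff hv).2 hxv⟩).symm
  · exact absurd ((col_iff ha).1 (hall a ha)) hxa

variable {S : Set P} (hS : IsConvex Ls S)
include hS

theorem IsConvex.mem_of_col {b w : P} (ha : a ∈ S) (hb : b ∈ S) (ha' : a ∈ S') (hb' : b ∈ S')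
    (hab : ¬ Col Ls a b) (hw : w ∈ S') (hwa : Col Ls w a) : w ∈ S := by
  by_cases hwb : Col Ls w b
  · exact hS.2 a ha b hb hab w hwa.symm hwb
  obtain rfl | hwa_ne := eq_or_ne w a
  · exact ha
  obtain ⟨M, hM, hwM, haM⟩ := hwa.exists_line hwa_ne
  have hMS' : M ⊆ S' := hS'.line_subset hM hwM haM hwa_ne hw ha'
  have hbM : b ∉ M := fun h => hab (col_of_mem hM haM h)
  obtain ⟨u, huM, hbu⟩ := hpol.exists_col hS' hb' hM hMS' hbM haM
  have huS : u ∈ S := hS.2 a ha b hb hab u (col_of_mem hM haM huM) hbu.symm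
  have hau : a ≠ u := by rintro rfl; exact hab hbu.symm
  exact hS.1.line_subset hM haM huM hau ha huS hwM

variable {p q : P} (hp : p ∈ S) (hq : q ∈ S) (hp' : p ∈ S') (hq' : q ∈ S')
  (hpq : ¬ Col Ls p q)
include hp hq hp' hq' hpq

theorem IsConvex.exists_not_col (ha' : a ∈ S') (hap : Col Ls a p) :
    ∃ b ∈ S, b ∈ S' ∧ ¬ Col Ls a b := by
  by_cases haq : Col Ls a q
  swap
  · exact ⟨q, hq, hq', haq⟩
  have hap_ne : a ≠ p := by rintro rfl; exact hpq haq
  obtain ⟨L, hL, haL, hpL⟩ := hap.exists_line hap_ne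
  have hLS' : L ⊆ S' := hS'.line_subset hL haL hpL hap_ne ha' hp'
  obtain ⟨c, hc', hac⟩ := hpol.2.1 a ha'
  rw [hS'.colIn_iff_col ha' hc'] at hac
  have hcL : c ∉ L := fun h => hac (col_of_mem hL haL h)
  obtain ⟨d, hdL, hcd⟩ := hpol.exists_col hS' hc' hL hLS' hcL haL
  -- `a` is the only point of `L` collinear with `q`, and `d ≠ a` since `c` is not collinear with `a`.
  have hdq : ¬ Col Ls d q := by
    intro hdq
    have had : a = d := hpol.eq_of_col hS' hq' hL hLS' hpL (fun h => hpq h.symm) haL hdL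
      haq.symm hdq.symm
    exact hac (had ▸ hcd.symm)
  have hdS : d ∈ S := hS.mem_of_col hS' hpol hp hq hp' hq' hpq (hLS' hdL) (col_of_mem hL hdL hpL)
  have hcS : c ∈ S := hS.mem_of_col hS' hpol hdS hq (hLS' hdL) hq' hdq hc' hcd
  exact ⟨c, hcS, hc', hac⟩

theorem IsConvex.subset_of_isPolarSpace (hL : L ∈ Ls) (hpL : p ∈ L) (hLS' : L ⊆ S') :
    S' ⊆ S := by
  intro z hz
  by_cases hzp : Col Ls z p
  · exact hS.mem_of_col hS' hpol hp hq hp' hq' hpq hz hzp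
  have hzL : z ∉ L := fun h => hzp (col_of_mem hL h hpL)
  obtain ⟨a, haL, hza⟩ := hpol.exists_col hS' hz hL hLS' hzL hpL
  have hap : Col Ls a p := col_of_mem hL haL hpL
  have haS : a ∈ S := hS.mem_of_col hS' hpol hp hq hp' hq' hpq (hLS' haL) hap
  obtain ⟨b, hbS, hb', hab⟩ := hS.exists_not_col hS' hpol hp hq hp' hq' hpq (hLS' haL) hap
  exact hS.mem_of_col hS' hpol haS hbS (hLS' haL) hb' hab hz hza

end PolarSubspace

section Symplecton

variable {Ls : Set (Set P)} {S T L : Set P} {p q x : P}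

theorem SmallestConvex.eq (hS : SmallestConvex Ls p q S) (hT : SmallestConvex Ls p q T) :
    S = T :=
  (hS.2.2.2 T hT.1 hT.2.1 hT.2.2.1).antisymm (hT.2.2.2 S hS.1 hS.2.1 hS.2.2.1)

theorem StrongParapolar2.exists_isPolarSpace (hΓ : StrongParapolar2 Ls) (hS : IsSymp Ls S) :
    ∃ r, IsPolarSpace Ls S r := by
  obtain ⟨x, y, hxy, hS⟩ := hS
  obtain ⟨T, hT, r, -, hpol⟩ := hΓ.pps2 x y hxy
  exact ⟨r, hS.eq hT ▸ hpol⟩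

theorem IsConvex.line_subset (hS : IsConvex Ls S) (hp : p ∈ S) (hq : q ∈ S)
    (hpq : ¬ Col Ls p q) (hL : L ∈ Ls) (hpL : p ∈ L) (hxL : x ∈ L) (hxq : Col Ls x q) :
    L ⊆ S := by
  have hxS : x ∈ S := hS.2 p hp q hq hpq x (col_of_mem hL hpL hxL) hxq
  have hpx : p ≠ x := by rintro rfl; exact hpq hxq
  exact hS.1.line_subset hL hpL hxL hpx hp hxS

end Symplecton

/-- The Quadrangle Lemma. -/
theorem quadrangle_lemma (Ls : Set (Set P)) (hΓ : StrongParapolar2 Ls)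
    (L₁ L₂ L₃ L₄ : Set P)
    (hL₁ : L₁ ∈ Ls) (hL₂ : L₂ ∈ Ls) (hL₃ : L₃ ∈ Ls) (hL₄ : L₄ ∈ Ls)
    (p₁ p₂ p₃ p₄ : P)
    (h₁ : p₁ ∈ L₁ ∧ p₁ ∈ L₂) (h₂ : p₂ ∈ L₂ ∧ p₂ ∈ L₃)
    (h₃ : p₃ ∈ L₃ ∧ p₃ ∈ L₄) (h₄ : p₄ ∈ L₄ ∧ p₄ ∈ L₁)
    (hnc : ¬ Col Ls p₁ p₃) :
    ∃! S : Set P, IsSymp Ls S ∧ L₁ ⊆ S ∧ L₂ ⊆ S ∧ L₃ ⊆ S ∧ L₄ ⊆ S := by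
  obtain ⟨S, hS, -⟩ := hΓ.pps2 p₁ p₃ hnc
  have ⟨hconv, hp₁, hp₃, hmin⟩ := hS
  have hnc' : ¬ Col Ls p₃ p₁ := fun h => hnc h.symm
  refine ⟨S, ⟨⟨p₁, p₃, hnc, hS⟩,
    hconv.line_subset hp₁ hp₃ hnc hL₁ h₁.1 h₄.2 (col_of_mem hL₄ h₄.1 h₃.2),
    hconv.line_subset hp₁ hp₃ hnc hL₂ h₁.2 h₂.1 (col_of_mem hL₃ h₂.2 h₃.1),
    hconv.line_subset hp₃ hp₁ hnc' hL₃ h₃.1 h₂.2 (col_of_mem hL₂ h₂.1 h₁.2),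
    hconv.line_subset hp₃ hp₁ hnc' hL₄ h₃.2 h₄.1 (col_of_mem hL₁ h₄.2 h₁.1)⟩, ?_⟩
  rintro S' ⟨hS', -, hL₂S', hL₃S', -⟩
  obtain ⟨r, hpol⟩ := hΓ.exists_isPolarSpace hS'
  obtain ⟨x, y, -, hconv', -⟩ := hS'
  have hp₁' : p₁ ∈ S' := hL₂S' h₁.2
  have hp₃' : p₃ ∈ S' := hL₃S' h₃.1
  exact (hconv.subset_of_isPolarSpace hconv'.1 hpol hp₁ hp₃ hp₁' hp₃' hnc hL₂ h₁.2 hL₂S').antisymm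
    (hmin S' hconv' hp₁' hp₃')
end ImbrexGeom
end

section
/- In an imbrex geometry of symplectic rank 2, any two distinct maximal singular subspaces intersect in at most one point. -/
namespace ImbrexGeom

variable {P : Type*}

/-! ### Auxiliary lemmas -/

lemma col_symm {Ls : Set (Set P)} {x y : P} (h : Col Ls x y) : Col Ls y x := by
  rcases h with rfl | ⟨L, hL, hx, hy⟩
  · exact Or.inl rfl
  · exact Or.inr ⟨L, hL, hy, hx⟩

lemma colIn_symm {Ls : Set (Set P)} {S : Set P} {x y : P} (h : ColIn Ls S x y) :
    ColIn Ls S y x := by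
  rcases h with rfl | ⟨L, hL, hx, hy⟩
  · exact Or.inl rfl
  · exact Or.inr ⟨L, hL, hy, hx⟩

lemma colIn_univ_to_col {Ls : Set (Set P)} {x y : P} (h : ColIn Ls Set.univ x y) :
    Col Ls x y := by
  rcases h with rfl | ⟨L, ⟨hL, _⟩, hx, hy⟩
  · exact Or.inl rfl
  · exact Or.inr ⟨L, hL, hx, hy⟩

lemma colIn_to_col {Ls : Set (Set P)} {S : Set P} {x y : P} (h : ColIn Ls S x y) :
    Col Ls x y := by
  rcases h with rfl | ⟨L, ⟨hL, _⟩, hx, hy⟩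
  · exact Or.inl rfl
  · exact Or.inr ⟨L, hL, hx, hy⟩

lemma col_to_colIn {Ls : Set (Set P)} {S : Set P} (hS : IsSubspace Ls S)
    {x y : P} (hx : x ∈ S) (hy : y ∈ S) (h : Col Ls x y) : ColIn Ls S x y := by
  rcases h with rfl | ⟨L, hL, hxL, hyL⟩
  · exact Or.inl rfl
  · by_cases hxy : x = y
    · exact Or.inl hxy
    · exact Or.inr ⟨L, ⟨hL, hS.2 L ⟨hL, Set.subset_univ _⟩ x hxL y hyL hxy hx hy⟩, hxL, hyL⟩

/-- The perp of a set of points inside `S`. -/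
def PerpPts (Ls : Set (Set P)) (S A : Set P) : Set P :=
  {z ∈ S | ∀ a ∈ A, ColIn Ls S z a}

lemma perpPts_antitone {Ls : Set (Set P)} {S A B : Set P} (h : A ⊆ B) :
    PerpPts Ls S B ⊆ PerpPts Ls S A :=
  fun _ hz => ⟨hz.1, fun a ha => hz.2 a (h ha)⟩

lemma subset_perpPts_perpPts {Ls : Set (Set P)} {S A : Set P} (hA : A ⊆ S) :
    A ⊆ PerpPts Ls S (PerpPts Ls S A) :=
  fun a ha => ⟨hA ha, fun _ hw => colIn_symm (hw.2 a ha)⟩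

lemma perpPts_subspace {Ls : Set (Set P)} {S A : Set P} (hA : A ⊆ S)
    (h4 : ∀ x ∈ S, ∀ L, LineIn Ls S L → x ∉ L →
      (∃! y, y ∈ L ∧ ColIn Ls S x y) ∨ ∀ y ∈ L, ColIn Ls S x y) :
    IsSubspaceIn Ls S (PerpPts Ls S A) := by
  refine ⟨fun z hz => hz.1, fun N hN a ha b hb hab haT hbT n hn => ?_⟩
  refine ⟨hN.2 hn, fun c hc => ?_⟩
  by_cases hcN : c ∈ N
  · exact Or.inr ⟨N, hN, hn, hcN⟩
  · rcases h4 c (hA hc) N hN hcN with ⟨u, _, hu⟩ | hall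
    · exact absurd ((hu a ⟨ha, colIn_symm (haT.2 c hc)⟩).trans
        (hu b ⟨hb, colIn_symm (hbT.2 c hc)⟩).symm) hab
    · exact colIn_symm (hall n hn)

lemma perpPts_perpPts_singular {Ls : Set (Set P)} {S A : Set P} (hA : A ⊆ S)
    (h4 : ∀ x ∈ S, ∀ L, LineIn Ls S L → x ∉ L →
      (∃! y, y ∈ L ∧ ColIn Ls S x y) ∨ ∀ y ∈ L, ColIn Ls S x y)
    (hclique : ∀ u ∈ A, ∀ v ∈ A, ColIn Ls S u v) :
    IsSingularIn Ls S (PerpPts Ls S (PerpPts Ls S A)) := by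
  have hAperp : A ⊆ PerpPts Ls S A := fun a ha => ⟨hA ha, fun b hb => hclique a ha b hb⟩
  refine ⟨perpPts_subspace (fun z hz => hz.1) h4, fun u hu v hv => ?_⟩
  have hvA : v ∈ PerpPts Ls S A := perpPts_antitone hAperp hv
  exact hu.2 v hvA

lemma empty_singular {Ls : Set (Set P)} {S : Set P} : IsSingularIn Ls S (∅ : Set P) := by
  refine ⟨⟨Set.empty_subset _, fun L _ a _ b _ _ haT => absurd haT (Set.notMem_empty a)⟩,
    fun u hu => absurd hu (Set.notMem_empty u)⟩

lemma singleton_singular {Ls : Set (Set P)} {S : Set P} {x : P} (hx : x ∈ S) :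
    IsSingularIn Ls S ({x} : Set P) := by
  refine ⟨⟨Set.singleton_subset_iff.2 hx, fun L _ a _ b _ hab haT hbT => ?_⟩,
    fun u hu v hv => ?_⟩
  · exact absurd (haT.trans hbT.symm) hab
  · exact Or.inl (hu.trans hv.symm)

/-- In an imbrex geometry of symplectic rank 2, two distinct maximal
singular subspaces intersect in at most one point. -/
theorem blocks_intersect_in_at_most_one_point (Ls : Set (Set P))
    (hΓ : ImbrexGeometry Ls) (hrk : SympRank Ls 2)
    (B₁ B₂ : Set P) (hB₁ : IsBlock Ls B₁) (hB₂ : IsBlock Ls B₂)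
    (hne : B₁ ≠ B₂) :
    (B₁ ∩ B₂).Subsingleton := by
  intro x hx y hy
  by_contra hxy
  -- a line through x and y
  obtain ⟨L, hL, hxL, hyL⟩ : ∃ L ∈ Ls, x ∈ L ∧ y ∈ L := by
    rcases hB₁.1.2 x hx.1 y hy.1 with rfl | ⟨L, ⟨hL, _⟩, hxL, hyL⟩
    · exact absurd rfl hxy
    · exact ⟨L, hL, hxL, hyL⟩
  -- the set of common neighbours of x and y
  set D : Set P := {z | Col Ls z x ∧ Col Ls z y} with hD
  -- every point of D is collinear with every point of L
  have hDL : ∀ z ∈ D, ∀ l ∈ L, Col Ls z l := by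
    intro z hz l hl
    by_cases hzL : z ∈ L
    · exact Or.inr ⟨L, hL, hzL, hl⟩
    by_contra hncol
    obtain ⟨S', hS', r, hr2, hps⟩ := hΓ.spp.pps2 z l hncol
    have hzS' : z ∈ S' := hS'.2.1
    have hlS' : l ∈ S' := hS'.2.2.1
    have hxS' : x ∈ S' := hS'.1.2 z hzS' l hlS' hncol x hz.1
      (Or.inr ⟨L, hL, hxL, hl⟩)
    have hyS' : y ∈ S' := hS'.1.2 z hzS' l hlS' hncol y hz.2
      (Or.inr ⟨L, hL, hyL, hl⟩)
    have hLS' : L ⊆ S' := hS'.1.1.2 L ⟨hL, Set.subset_univ _⟩ x hxL y hyL hxy hxS' hyS'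
    have hzx : z ≠ x := fun h => hzL (h ▸ hxL)
    have hzy : z ≠ y := fun h => hzL (h ▸ hyL)
    have hczx : ColIn Ls S' z x := col_to_colIn hS'.1.1 hzS' hxS' hz.1
    have hczy : ColIn Ls S' z y := col_to_colIn hS'.1.1 hzS' hyS' hz.2
    rcases hps.2.2.2 z hzS' L ⟨hL, hLS'⟩ hzL with ⟨u, _, hu⟩ | hall
    · exact hxy ((hu x ⟨hxL, hczx⟩).trans (hu y ⟨hyL, hczy⟩).symm)
    · exact hncol (colIn_to_col (hall l hl))
  by_cases hclique : ∀ u ∈ D, ∀ v ∈ D, Col Ls u v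
  · -- D is a singular subspace containing both blocks: contradiction with B₁ ≠ B₂
    have hDsub : IsSubspaceIn Ls Set.univ D := by
      refine ⟨Set.subset_univ _, fun N hN a ha b hb hab haD hbD n hn => ?_⟩
      have hcol : ∀ w : P, Col Ls a w → Col Ls b w → w ∉ N → Col Ls n w := by
        intro w hcaw hcbw hwN
        rcases hΓ.spp.pps1 w N hN.1 hwN with hnone | ⟨u, _, hu⟩ | hall
        · exact absurd (col_symm hcaw) (hnone a ha)
        · exact absurd ((hu a ⟨ha, col_symm hcaw⟩).trans (hu b ⟨hb, col_symm hcbw⟩).symm) hab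
        · exact col_symm (hall n hn)
      constructor
      · by_cases hxN : x ∈ N
        · exact Or.inr ⟨N, hN.1, hn, hxN⟩
        · exact hcol x haD.1 hbD.1 hxN
      · by_cases hyN : y ∈ N
        · exact Or.inr ⟨N, hN.1, hn, hyN⟩
        · exact hcol y haD.2 hbD.2 hyN
    have hDsing : IsSingularIn Ls Set.univ D := by
      refine ⟨hDsub, fun u hu v hv => ?_⟩
      rcases hclique u hu v hv with rfl | ⟨N, hN, huN, hvN⟩
      · exact Or.inl rfl
      · exact Or.inr ⟨N, ⟨hN, Set.subset_univ _⟩, huN, hvN⟩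
    have hB₁D : B₁ ⊆ D := fun b hb =>
      ⟨colIn_univ_to_col (hB₁.1.2 b hb x hx.1), colIn_univ_to_col (hB₁.1.2 b hb y hy.1)⟩
    have hB₂D : B₂ ⊆ D := fun b hb =>
      ⟨colIn_univ_to_col (hB₂.1.2 b hb x hx.2), colIn_univ_to_col (hB₂.1.2 b hb y hy.2)⟩
    exact hne ((hB₁.2 D hDsing hB₁D).symm.trans (hB₂.2 D hDsing hB₂D))
  · -- there are non‑collinear p, q ∈ D; build a symplecton with a singular plane
    push_neg at hclique
    obtain ⟨p, hp, q, hq, hpq⟩ := hclique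
    have hpL : p ∉ L := fun h => hpq (col_symm (hDL q hq p h))
    have hqL : q ∉ L := fun h => hpq (hDL p hp q h)
    obtain ⟨S, hS, r, hr2, hps⟩ := hΓ.spp.pps2 p q hpq
    have hpS : p ∈ S := hS.2.1
    have hqS : q ∈ S := hS.2.2.1
    have hxS : x ∈ S := hS.1.2 p hpS q hqS hpq x hp.1 (col_symm hq.1)
    have hyS : y ∈ S := hS.1.2 p hpS q hqS hpq y hp.2 (col_symm hq.2)
    have hLS : L ⊆ S := hS.1.1.2 L ⟨hL, Set.subset_univ _⟩ x hxL y hyL hxy hxS hyS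
    have h4 := hps.2.2.2
    have hPR : HasPolarRank Ls S 2 := hrk S ⟨p, q, hpq, hS⟩
    have hpcolL : ∀ l ∈ L, ColIn Ls S p l := by
      intro l hl
      rcases h4 p hpS L ⟨hL, hLS⟩ hpL with ⟨u, _, hu⟩ | hall
      · exact absurd ((hu x ⟨hxL, col_to_colIn hS.1.1 hpS hxS hp.1⟩).trans
          (hu y ⟨hyL, col_to_colIn hS.1.1 hpS hyS hp.2⟩).symm) hxy
      · exact hall l hl
    have hqcolL : ∀ l ∈ L, ColIn Ls S q l := by
      intro l hl
      rcases h4 q hqS L ⟨hL, hLS⟩ hqL with ⟨u, _, hu⟩ | hall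
      · exact absurd ((hu x ⟨hxL, col_to_colIn hS.1.1 hqS hxS hq.1⟩).trans
          (hu y ⟨hyL, col_to_colIn hS.1.1 hqS hyS hq.2⟩).symm) hxy
      · exact hall l hl
    have hqPerpL : q ∈ PerpPts Ls S L := ⟨hqS, fun l hl => hqcolL l hl⟩
    -- cliques
    have hcliqueL : ∀ u ∈ L, ∀ v ∈ L, ColIn Ls S u v :=
      fun u hu v hv => Or.inr ⟨L, ⟨hL, hLS⟩, hu, hv⟩
    have hLpS : L ∪ {p} ⊆ S := Set.union_subset hLS (Set.singleton_subset_iff.2 hpS)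
    have hcliqueLp : ∀ u ∈ L ∪ {p}, ∀ v ∈ L ∪ {p}, ColIn Ls S u v := by
      rintro u (hu | rfl) v (hv | rfl)
      · exact hcliqueL u hu v hv
      · exact colIn_symm (hpcolL u hu)
      · exact hpcolL v hv
      · exact Or.inl rfl
    -- the four nested singular subspaces
    set T₂ : Set P := PerpPts Ls S (PerpPts Ls S L) with hT₂
    set T₃ : Set P := PerpPts Ls S (PerpPts Ls S (L ∪ {p})) with hT₃
    have hT₂sing : IsSingularIn Ls S T₂ := perpPts_perpPts_singular hLS h4 hcliqueL
    have hT₃sing : IsSingularIn Ls S T₃ := perpPts_perpPts_singular hLpS h4 hcliqueLp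
    have hLT₂ : L ⊆ T₂ := subset_perpPts_perpPts hLS
    have hT₂T₃ : T₂ ⊆ T₃ :=
      perpPts_antitone (perpPts_antitone (Set.subset_union_left))
    have hpT₃ : p ∈ T₃ := subset_perpPts_perpPts hLpS (Or.inr rfl)
    have hpT₂ : p ∉ T₂ := by
      intro hmem
      have : ColIn Ls S p q := hmem.2 q hqPerpL
      exact hpq (colIn_to_col this)
    -- the chain of length 4
    have hbound := hPR.1 4 ![∅, {x}, T₂, T₃] ?_ ?_
    · omega
    · intro i
      fin_cases i
      · exact empty_singular
      · exact singleton_singular hxS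
      · exact hT₂sing
      · exact hT₃sing
    · intro i j hij
      have h01 : (∅ : Set P) ⊂ {x} := by
        exact Set.ssubset_iff_of_subset (Set.empty_subset _) |>.2 ⟨x, rfl, fun h => h⟩
      have h12 : ({x} : Set P) ⊂ T₂ := by
        refine ⟨Set.singleton_subset_iff.2 (hLT₂ hxL), fun hsub => ?_⟩
        have : y ∈ ({x} : Set P) := hsub (hLT₂ hyL)
        exact hxy (this.symm)
      have h23 : T₂ ⊂ T₃ := ⟨hT₂T₃, fun hsub => hpT₂ (hsub hpT₃)⟩
      fin_cases i <;> fin_cases j <;>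
        first
          | exact absurd hij (by decide)
          | exact h01
          | exact h12
          | exact h23
          | exact h01.trans h12
          | exact h12.trans h23
          | exact (h01.trans h12).trans h23
end ImbrexGeom
end
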